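/- arXiv:2112.10875 — 5 statements merged into one kernel-verified Lean document; each statement's English description precedes it below -/
import Mathlib

section
/- Let G=(V,E) be a polytree. The polyhedron Q_G ⊆ ℝ^{|V|+|E|} defined by z_l ≥ 0 for all l∈V, y_{lm} ≥ 0 for all (l,m)∈E, Σ_{l∈V} z_l = 1, 2z_l + Σ_{h∈pa(l)} y_{hl} − y_{lm} ≥ 0 for every edge (l,m)∈E, and 3z_l + Σ_{h∈pa(l)} y_{hl} − Σ_{m∈ch(l)} y_{lm} ≥ 0 for every l∈V, is a bounded subset of ℝ^{|V|+|E|}. -/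
open MvPolynomial Matrix Finset

namespace LNG

variable {n : ℕ}

/-- A directed path in the directed graph `E`, recorded as the (nonempty) list of
visited vertices. -/
def IsDiPath (E : Fin n → Fin n → Prop) : List (Fin n) → Prop
  | [] => False
  | [_] => True
  | a :: b :: l => E a b ∧ IsDiPath E (b :: l)

/-- `p` is a directed path from `v` to `i` (possibly of length zero). -/
def IsPathFromTo (E : Fin n → Fin n → Prop) (v : Fin n) (p : List (Fin n)) (i : Fin n) : Prop :=
  IsDiPath E p ∧ p.head? = some v ∧ p.getLast? = some i

/-- A `k`-trek with top `v` between the vertices `i 0, …, i (k-1)`: an ordered collection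
of directed paths with common source `v`, where the `r`-th path has sink `i r`. -/
def IsTrek (E : Fin n → Fin n → Prop) {k : ℕ} (v : Fin n)
    (P : Fin k → List (Fin n)) (i : Fin k → Fin n) : Prop :=
  ∀ r, IsPathFromTo E v (P r) (i r)

/-- A simple `k`-trek: the top is the only vertex lying on all `k` paths. -/
def IsSimpleTrek (E : Fin n → Fin n → Prop) {k : ℕ} (v : Fin n)
    (P : Fin k → List (Fin n)) (i : Fin k → Fin n) : Prop :=
  IsTrek E v P i ∧ ∀ w : Fin n, (∀ r, w ∈ P r) → w = v

/-- A 2-trek with top `v` between `i` and `j`. -/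
def IsTrek2 (E : Fin n → Fin n → Prop) (v : Fin n) (p q : List (Fin n)) (i j : Fin n) : Prop :=
  IsPathFromTo E v p i ∧ IsPathFromTo E v q j

def IsSimpleTrek2 (E : Fin n → Fin n → Prop) (v : Fin n) (p q : List (Fin n))
    (i j : Fin n) : Prop :=
  IsTrek2 E v p q i j ∧ ∀ w : Fin n, w ∈ p → w ∈ q → w = v

/-- A 3-trek with top `v` between `i`, `j` and `k`. -/
def IsTrek3 (E : Fin n → Fin n → Prop) (v : Fin n) (p q r : List (Fin n))
    (i j k : Fin n) : Prop :=
  IsPathFromTo E v p i ∧ IsPathFromTo E v q j ∧ IsPathFromTo E v r k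

def IsSimpleTrek3 (E : Fin n → Fin n → Prop) (v : Fin n) (p q r : List (Fin n))
    (i j k : Fin n) : Prop :=
  IsTrek3 E v p q r i j k ∧ ∀ w : Fin n, w ∈ p → w ∈ q → w ∈ r → w = v

def Trek2Exists (E : Fin n → Fin n → Prop) (i j : Fin n) : Prop :=
  ∃ v p q, IsTrek2 E v p q i j

def Trek3Exists (E : Fin n → Fin n → Prop) (i j k : Fin n) : Prop :=
  ∃ v p q r, IsTrek3 E v p q r i j k

/-- The underlying undirected (simple) graph of the directed graph `E`. -/
def underlying (E : Fin n → Fin n → Prop) : SimpleGraph (Fin n) where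
  Adj a b := a ≠ b ∧ (E a b ∨ E b a)
  symm := ⟨fun a b h => ⟨h.1.symm, h.2.symm⟩⟩
  loopless := ⟨fun a h => h.1 rfl⟩

/-- A polytree: a topologically ordered DAG whose underlying undirected graph is a tree. -/
def IsPolytree (E : Fin n → Fin n → Prop) : Prop :=
  (∀ i j : Fin n, E i j → i < j) ∧ (underlying E).IsTree

/-! ### Variables of the moment polynomial ring -/

abbrev SIdx (n : ℕ) := {p : Fin n × Fin n // p.1 ≤ p.2}
abbrev TIdx (n : ℕ) := {p : Fin n × Fin n × Fin n // p.1 ≤ p.2.1 ∧ p.2.1 ≤ p.2.2}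

/-- Variables `s_{ij}` (`1 ≤ i ≤ j ≤ n`) and `t_{ijk}` (`1 ≤ i ≤ j ≤ k ≤ n`). -/
abbrev MomVar (n : ℕ) := SIdx n ⊕ TIdx n

/-- Parameter variables `a_i`, `b_i` (`i ∈ V`) and `λ_{ij}`. -/
abbrev PVar (n : ℕ) := (Fin n ⊕ Fin n) ⊕ Fin n × Fin n

/-- Median of three. -/
def mid3 (i j k : Fin n) : Fin n := max (min i j) (min (max i j) k)

lemma min3_le_mid3 (i j k : Fin n) : min i (min j k) ≤ mid3 i j k :=
  le_trans (le_min (min_le_left _ _) (le_trans (min_le_right i (min j k)) (min_le_left j k)))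
    (le_max_left _ _)

lemma mid3_le_max3 (i j k : Fin n) : mid3 i j k ≤ max i (max j k) :=
  max_le (le_trans (min_le_left i j) (le_max_left _ _))
    (le_trans (min_le_right (max i j) k) (le_trans (le_max_right j k) (le_max_right i _)))

/-- The variable `s_{ij}` (indices sorted). -/
noncomputable def svar (i j : Fin n) : MvPolynomial (MomVar n) ℝ :=
  X (Sum.inl ⟨(min i j, max i j), min_le_max⟩)

/-- The variable `t_{ijk}` (indices sorted). -/
noncomputable def tvar (i j k : Fin n) : MvPolynomial (MomVar n) ℝ :=
  X (Sum.inr ⟨(min i (min j k), mid3 i j k, max i (max j k)),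
      min3_le_mid3 i j k, mid3_le_max3 i j k⟩)

/-- Evaluation of the moment variables at a concrete pair `(S, T)`. -/
def evalVar (S : Matrix (Fin n) (Fin n) ℝ) (T : Fin n → Fin n → Fin n → ℝ) :
    MomVar n → ℝ
  | Sum.inl p => S p.1.1 p.1.2
  | Sum.inr p => T p.1.1 p.1.2.1 p.1.2.2

/-! ### The third-order moment model -/

/-- `Λ ∈ ℝ^E`. -/
def Supported (E : Fin n → Fin n → Prop) (Λ : Matrix (Fin n) (Fin n) ℝ) : Prop :=
  ∀ i j, ¬ E i j → Λ i j = 0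

/-- Covariance matrix `(I-Λ)^{-T} Ω⁽²⁾ (I-Λ)^{-1}`. -/
noncomputable def momentS (Λ : Matrix (Fin n) (Fin n) ℝ) (ω2 : Fin n → ℝ) :
    Matrix (Fin n) (Fin n) ℝ :=
  ((1 - Λ)⁻¹)ᵀ * Matrix.diagonal ω2 * (1 - Λ)⁻¹

/-- Third moment tensor `Ω⁽³⁾ ∙ (I-Λ)^{-1} ∙ (I-Λ)^{-1} ∙ (I-Λ)^{-1}`. -/
noncomputable def momentT (Λ : Matrix (Fin n) (Fin n) ℝ) (ω3 : Fin n → ℝ)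
    (i j k : Fin n) : ℝ :=
  ∑ a, ω3 a * (1 - Λ)⁻¹ a i * (1 - Λ)⁻¹ a j * (1 - Λ)⁻¹ a k

/-- Membership in the third-order moment model `M^{≤3}(G)`. -/
def MomentModel (E : Fin n → Fin n → Prop)
    (S : Matrix (Fin n) (Fin n) ℝ) (T : Fin n → Fin n → Fin n → ℝ) : Prop :=
  ∃ (Λ : Matrix (Fin n) (Fin n) ℝ) (ω2 ω3 : Fin n → ℝ),
    Supported E Λ ∧ (∀ i, 0 < ω2 i) ∧ S = momentS Λ ω2 ∧ T = momentT Λ ω3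

/-- The third-order moment (vanishing) ideal `I^{≤3}(G)`. -/
noncomputable def momentIdeal (E : Fin n → Fin n → Prop) : Ideal (MvPolynomial (MomVar n) ℝ) where
  carrier := {f | ∀ S T, MomentModel E S T → eval (evalVar S T) f = 0}
  add_mem' := by
    intro f g hf hg S T h
    simp [map_add, hf S T h, hg S T h]
  zero_mem' := by
    intro S T h
    simp
  smul_mem' := by
    intro c f hf S T h
    simp [smul_eq_mul, _root_.map_mul, hf S T h]

/-- A fully symmetric 3-tensor. -/
def SymTensor3 (T : Fin n → Fin n → Fin n → ℝ) : Prop :=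
  ∀ i j k : Fin n, T i j k = T j i k ∧ T i j k = T i k j

/-! ### Trek matrices and their minors -/

/-- `top(i,k) = top(j,k)`: there is a common vertex `v` that is the top of the
simple 2-treks between `i,k` and between `j,k`. -/
def SameTop2 (E : Fin n → Fin n → Prop) (i j k : Fin n) : Prop :=
  ∃ v, (∃ p q, IsSimpleTrek2 E v p q i k) ∧ (∃ p q, IsSimpleTrek2 E v p q j k)

/-- `top(i,l,m) = top(j,l,m)`. -/
def SameTop3 (E : Fin n → Fin n → Prop) (i j l m : Fin n) : Prop :=
  ∃ v, (∃ p q r, IsSimpleTrek3 E v p q r i l m) ∧ (∃ p q r, IsSimpleTrek3 E v p q r j l m)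

/-- `f` is a `2 × 2` minor of the trek-matrix `A_{i,j}`. -/
def IsTrekMinorOf (E : Fin n → Fin n → Prop) (i j : Fin n)
    (f : MvPolynomial (MomVar n) ℝ) : Prop :=
  (∃ k k', SameTop2 E i j k ∧ SameTop2 E i j k' ∧
      f = svar i k * svar j k' - svar j k * svar i k') ∨
  (∃ k l m, SameTop2 E i j k ∧ SameTop3 E i j l m ∧
      f = svar i k * tvar j l m - svar j k * tvar i l m) ∨
  (∃ l m l' m', SameTop3 E i j l m ∧ SameTop3 E i j l' m' ∧
      f = tvar i l m * tvar j l' m' - tvar j l m * tvar i l' m')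

/-- Variables `s_{ij}` with no 2-trek between `i,j` and `t_{ijk}` with no 3-trek. -/
def noTrekVars (E : Fin n → Fin n → Prop) : Set (MvPolynomial (MomVar n) ℝ) :=
  {f | (∃ i j, ¬ Trek2Exists E i j ∧ f = svar i j) ∨
       (∃ i j k, ¬ Trek3Exists E i j k ∧ f = tvar i j k)}

/-- The 2-minors of the trek-matrices `A_{i,j}` over edges `i → j` of `G`. -/
def edgeMinors (E : Fin n → Fin n → Prop) : Set (MvPolynomial (MomVar n) ℝ) :=
  {f | ∃ i j, E i j ∧ IsTrekMinorOf E i j f}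

/-- The 2-minors of all trek-matrices `A_{i,j}`. -/
def allMinors (E : Fin n → Fin n → Prop) : Set (MvPolynomial (MomVar n) ℝ) :=
  {f | ∃ i j, Trek2Exists E i j ∧ IsTrekMinorOf E i j f}

/-! ### The simple trek rule parametrization -/

/-- Product of the edge weights `w` along a path. -/
def pathProd {R : Type*} [CommSemiring R] (w : Fin n → Fin n → R) : List (Fin n) → R
  | [] => 1
  | [_] => 1
  | a :: b :: l => w a b * pathProd w (b :: l)

/-- Sum of a weight over all simple 2-treks between `i` and `j`. -/
noncomputable def trekSum2 {M : Type*} [AddCommMonoid M] (E : Fin n → Fin n → Prop)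
    (wt : Fin n → List (Fin n) → List (Fin n) → M) (i j : Fin n) : M :=
  ∑ᶠ τ : {x : Fin n × List (Fin n) × List (Fin n) //
      IsSimpleTrek2 E x.1 x.2.1 x.2.2 i j}, wt τ.1.1 τ.1.2.1 τ.1.2.2

/-- Sum of a weight over all simple 3-treks between `i`, `j` and `k`. -/
noncomputable def trekSum3 {M : Type*} [AddCommMonoid M] (E : Fin n → Fin n → Prop)
    (wt : Fin n → List (Fin n) → List (Fin n) → List (Fin n) → M) (i j k : Fin n) : M :=
  ∑ᶠ τ : {x : Fin n × List (Fin n) × List (Fin n) × List (Fin n) //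
      IsSimpleTrek3 E x.1 x.2.1 x.2.2.1 x.2.2.2 i j k},
    wt τ.1.1 τ.1.2.1 τ.1.2.2.1 τ.1.2.2.2

/-- The `(i,j)` coordinate of the simple trek rule parametrization `φ_G^*` (covariances). -/
noncomputable def phiS (E : Fin n → Fin n → Prop) (a : Fin n → ℝ)
    (Λ : Matrix (Fin n) (Fin n) ℝ) (i j : Fin n) : ℝ :=
  trekSum2 E (fun v p q => a v * (pathProd (fun x y => Λ x y) p * pathProd (fun x y => Λ x y) q)) i j

/-- The `(i,j,k)` coordinate of the simple trek rule parametrization `φ_G^*` (third moments). -/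
noncomputable def phiT (E : Fin n → Fin n → Prop) (b : Fin n → ℝ)
    (Λ : Matrix (Fin n) (Fin n) ℝ) (i j k : Fin n) : ℝ :=
  trekSum3 E (fun v p q r => b v * (pathProd (fun x y => Λ x y) p *
    pathProd (fun x y => Λ x y) q * pathProd (fun x y => Λ x y) r)) i j k

/-- The ring homomorphism `φ_G` of the simple trek rule. -/
noncomputable def phiG (E : Fin n → Fin n → Prop) :
    MvPolynomial (MomVar n) ℝ →ₐ[ℝ] MvPolynomial (PVar n) ℝ :=
  aeval fun v => match v with
    | Sum.inl p => trekSum2 E (fun v' pl ql =>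
        X (Sum.inl (Sum.inl v')) * (pathProd (fun x y => X (Sum.inr (x, y))) pl *
          pathProd (fun x y => X (Sum.inr (x, y))) ql)) p.1.1 p.1.2
    | Sum.inr p => trekSum3 E (fun v' pl ql rl =>
        X (Sum.inl (Sum.inr v')) * (pathProd (fun x y => X (Sum.inr (x, y))) pl *
          pathProd (fun x y => X (Sum.inr (x, y))) ql *
          pathProd (fun x y => X (Sum.inr (x, y))) rl)) p.1.1 p.1.2.1 p.1.2.2


/-- The polyhedron `Q_G`. -/
def QPoly (E : Fin n → Fin n → Prop) [DecidableRel E] :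
    Set ((Fin n → ℝ) × (Fin n → Fin n → ℝ)) :=
  {x | (∀ l, 0 ≤ x.1 l) ∧
       (∀ l m, E l m → 0 ≤ x.2 l m) ∧
       (∀ l m, ¬ E l m → x.2 l m = 0) ∧
       (∑ l, x.1 l) = 1 ∧
       (∀ l m, E l m →
         0 ≤ 2 * x.1 l + (∑ h ∈ Finset.univ.filter (fun h => E h l), x.2 h l) - x.2 l m) ∧
       (∀ l, 0 ≤ 3 * x.1 l + (∑ h ∈ Finset.univ.filter (fun h => E h l), x.2 h l)
          - ∑ m ∈ Finset.univ.filter (fun m => E l m), x.2 l m)}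

/-! In a topological order, the constraint `2 z_l + Σ_{h ∈ pa(l)} y_{hl} - y_{lm} ≥ 0` bounds each
edge weight `y_{lm}` by `2` plus the weights of the edges entering `l`, which are already bounded
by induction; since `0 ≤ z_l ≤ 1`, this gives `y_{lm} ≤ (n + 2) ^ (l + 1)`, so `Q_G` lies in a box. -/

section

variable {E : Fin n → Fin n → Prop} [DecidableRel E]

theorem le_pow_of_le_add_sum_parents (hlt : ∀ i j, E i j → i < j) {c : ℝ} (hc : 0 ≤ c)
    {y : Fin n → Fin n → ℝ}
    (hy : ∀ l m, E l m → y l m ≤ c + ∑ h ∈ univ.filter (fun h => E h l), y h l) (l : Fin n) :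
    ∀ m, E l m → y l m ≤ ((n : ℝ) + c) ^ ((l : ℕ) + 1) := by
  induction l using WellFoundedLT.induction with
  | _ l ih =>
    intro m hlm
    set B : ℝ := n + c
    have hB : 1 ≤ B := by
      have : (1 : ℝ) ≤ n := by exact_mod_cast l.pos
      linarith
    have hparents : ∑ h ∈ univ.filter (fun h => E h l), y h l ≤ n * B ^ (l : ℕ) :=
      calc ∑ h ∈ univ.filter (fun h => E h l), y h l
          ≤ ∑ _h ∈ univ.filter (fun h => E h l), B ^ (l : ℕ) := by
            refine sum_le_sum fun h hh => ?_
            have hhl : E h l := (mem_filter.1 hh).2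
            exact (ih h (hlt h l hhl) l hhl).trans (pow_le_pow_right₀ hB (hlt h l hhl))
        _ ≤ n * B ^ (l : ℕ) := by
            rw [sum_const, nsmul_eq_mul]
            gcongr
            exact_mod_cast (card_filter_le _ _).trans_eq (card_fin n)
    calc y l m ≤ c + n * B ^ (l : ℕ) := (hy l m hlm).trans (by gcongr)
      _ ≤ c * B ^ (l : ℕ) + n * B ^ (l : ℕ) := by
          gcongr
          exact le_mul_of_one_le_right hc (one_le_pow₀ hB)
      _ = B ^ ((l : ℕ) + 1) := by ring

theorem QPoly_subset_Icc (hlt : ∀ i j, E i j → i < j) :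
    QPoly E ⊆ Set.Icc 0 (1, fun _ _ => ((n : ℝ) + 2) ^ n) := by
  rintro ⟨z, y⟩ ⟨hz, hy, hy0, hsum, hedge, -⟩
  have hz1 : ∀ l, z l ≤ 1 := fun l => hsum ▸ single_le_sum (fun i _ => hz i) (mem_univ l)
  have hyB := le_pow_of_le_add_sum_parents hlt zero_le_two (y := y)
    fun l m hlm => by linarith [hedge l m hlm, hz1 l]
  refine ⟨⟨hz, fun l m => ?_⟩, ⟨hz1, fun l m => ?_⟩⟩ <;> by_cases hlm : E l m
  · exact hy l m hlm
  · exact (hy0 l m hlm).ge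
  · exact (hyB l m hlm).trans (pow_le_pow_right₀ (by linarith [l.pos]) l.isLt)
  · exact (hy0 l m hlm).trans_le (by positivity)

end

/-- For a polytree, the polyhedron `Q_G` is bounded. -/
theorem QPoly_bounded (n : ℕ) (E : Fin n → Fin n → Prop) [DecidableRel E]
    (hG : IsPolytree E) : Bornology.IsBounded (QPoly E) :=
  (Metric.isBounded_Icc _ _).subset (QPoly_subset_Icc hG.1)

end LNG
end

section
/- If the DAG G is the disjoint union of two subgraphs G₁ and G₂ (no edges between them), then the third-order moment ideal decomposes as I^{≤3}(G) = I^{≤3}(G₁) + I^{≤3}(G₂) + ⟨ s_{ij}, t_{ikj} : i∈V(G₁), j∈V(G₂), k∈V ⟩, i.e., it is the sum of the ideals of the two components together with the ideal generated by all covariance and third-moment variables whose indices meet both components. -/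
/-! If `Λ` respects the splitting `V = A ⊔ Aᶜ`, so does `(I - Λ)⁻¹`, because it commutes with
the projection onto `A`. Hence the mixed moments vanish and the moments inside a component only
depend on the restriction of the model to that component; this gives `⊇`. For `⊆`, drop the
monomials containing a mixed variable. What is left vanishes on the product of the models of
`G₁` and `G₂`, since any two of them glue to a model of `G`. A polynomial `∑ aᵢ bᵢ` in two
disjoint sets of variables that vanishes on a product `V × W` lies in `I(V) + I(W)`: either some
`aᵢ` is a linear combination of the others modulo `I(V)`, which shortens the sum, or every `bᵢ`
vanishes on `W`. -/

open MvPolynomial Matrix Finset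

namespace LNG

variable {n : ℕ}

/-- The set of variables all of whose indices lie in `A`. -/
def varsIn (A : Set (Fin n)) : Set (MomVar n) :=
  {v | match v with
    | Sum.inl p => p.1.1 ∈ A ∧ p.1.2 ∈ A
    | Sum.inr p => p.1.1 ∈ A ∧ p.1.2.1 ∈ A ∧ p.1.2.2 ∈ A}

end LNG

section SumMul

variable {K R ι Y : Type*} [Field K] [CommRing R] [Algebra K R]

theorem sum_mul_mem_span_sup_span (N W : Submodule K R) (φ : Y → R →ₗ[K] K) (a : ι → R)
    (F : Finset ι) (b : ι → R) (hb : ∀ i ∈ F, b i ∈ W)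
    (h : ∀ y, ∑ i ∈ F, φ y (b i) • a i ∈ N) :
    ∑ i ∈ F, a i * b i ∈ Ideal.span (N : Set R) ⊔ Ideal.span {f | f ∈ W ∧ ∀ y, φ y f = 0} := by
  classical
  induction F using Finset.induction_on generalizing b with
  | empty => simp
  | insert j F hj ih =>
    rw [Finset.sum_insert hj]
    simp only [Finset.sum_insert hj] at h
    by_cases hdep : ∃ c : ι → K, a j - ∑ i ∈ F, c i • a i ∈ N
    · obtain ⟨c, hc⟩ := hdep
      set r := a j - ∑ i ∈ F, c i • a i
      have hsum : a j * b j + ∑ i ∈ F, a i * b i = r * b j + ∑ i ∈ F, a i * (b i + c i • b j) := by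
        simp only [r, mul_add, Finset.sum_add_distrib, sub_mul, Finset.sum_mul, mul_smul_comm,
          smul_mul_assoc]
        ring
      have hφ : ∀ y, ∑ i ∈ F, φ y (b i + c i • b j) • a i =
          (φ y (b j) • a j + ∑ i ∈ F, φ y (b i) • a i) - φ y (b j) • r := by
        intro y
        simp only [r, map_add, map_smul, smul_eq_mul, add_smul, mul_smul, Finset.sum_add_distrib,
          smul_sub, Finset.smul_sum]
        rw [Finset.sum_congr rfl fun i _ => smul_comm (c i) (φ y (b j)) (a i)]
        abel
      rw [hsum]
      refine add_mem (Ideal.mul_mem_right _ _ (Submodule.mem_sup_left (Ideal.subset_span hc)))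
        (ih _ (fun i hi => W.add_mem (hb i (mem_insert_of_mem hi))
          (W.smul_mem _ (hb j (mem_insert_self j F)))) fun y => ?_)
      rw [hφ]
      exact N.sub_mem (h y) (N.smul_mem _ hc)
    · push Not at hdep
      have hbj : ∀ y, φ y (b j) = 0 := by
        intro y
        by_contra hy
        apply hdep fun i => -(φ y (b j))⁻¹ * φ y (b i)
        convert N.smul_mem (φ y (b j))⁻¹ (h y) using 1
        simp only [smul_add, smul_smul, inv_mul_cancel₀ hy, one_smul, Finset.smul_sum, neg_mul,
          neg_smul, Finset.sum_neg_distrib, sub_neg_eq_add]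
      refine add_mem (Ideal.mul_mem_left _ _ (Submodule.mem_sup_right
        (Ideal.subset_span ⟨hb j (mem_insert_self j F), hbj⟩)))
        (ih b (fun i hi => hb i (mem_insert_of_mem hi)) fun y => ?_)
      simpa [hbj y] using h y

end SumMul

namespace MvPolynomial

variable {σ R K : Type*} [Field K]

section CommSemiring

variable [CommSemiring R]

theorem eval_eq_of_eqOn {s : Set σ} {f : MvPolynomial σ R} (hf : f ∈ supported R s)
    {x y : σ → R} (h : s.EqOn x y) : eval x f = eval y f :=
  eval₂Hom_congr' rfl (fun _ hi _ => h (mem_supported.mp hf hi)) rfl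

theorem monomial_mem_supported {s : Set σ} {d : σ →₀ ℕ} (hd : ↑d.support ⊆ s) (r : R) :
    monomial d r ∈ supported R s := by
  rcases eq_or_ne r 0 with rfl | hr
  · simp
  · rwa [mem_supported, vars_monomial hr]

theorem sum_monomial_filter_mul_monomial_filter (s : Set σ) [DecidablePred (· ∈ s)]
    (g : MvPolynomial σ R) :
    ∑ d ∈ g.support, monomial (d.filter (· ∈ s)) (coeff d g) * monomial (d.filter (· ∉ s)) 1
      = g := by
  conv_rhs => rw [g.as_sum]
  refine Finset.sum_congr rfl fun d _ => ?_
  rw [monomial_mul, mul_one, Finsupp.filter_add_filter_not]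

end CommSemiring

theorem exists_mem_supported_sub_mem_span_X_compl [CommRing R] (s : Set σ)
    (f : MvPolynomial σ R) : ∃ g ∈ supported R s, f - g ∈ Ideal.span (X '' sᶜ) := by
  classical
  refine ⟨∑ d ∈ f.support with ↑d.support ⊆ s, monomial d (coeff d f),
    Subalgebra.sum_mem _ fun d hd => monomial_mem_supported (Finset.mem_filter.mp hd).2 _, ?_⟩
  have hrest : f - ∑ d ∈ f.support with ↑d.support ⊆ s, monomial d (coeff d f) =
      ∑ d ∈ f.support with ¬ ↑d.support ⊆ s, monomial d (coeff d f) := by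
    rw [sub_eq_iff_eq_add', Finset.sum_filter_add_sum_filter_not]
    exact f.as_sum
  rw [hrest]
  refine Ideal.sum_mem _ fun d hd => mem_ideal_span_X_image.mpr fun m hm => ?_
  obtain ⟨i, hid, his⟩ := Set.not_subset.mp (Finset.mem_filter.mp hd).2
  rw [Finset.mem_singleton.mp (support_monomial_subset hm)]
  exact ⟨i, his, Finsupp.mem_support_iff.mp hid⟩

theorem mem_span_supported_vanishingIdeal_sup {s t : Set σ} {V W : Set (σ → K)}
    {g : MvPolynomial σ K} (hg : g ∈ supported K (s ∪ t))
    (hVW : ∀ x ∈ V, ∀ y ∈ W, ∃ z, s.EqOn x z ∧ t.EqOn y z ∧ eval z g = 0) :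
    g ∈ Ideal.span {f | f ∈ supported K s ∧ f ∈ vanishingIdeal K V} ⊔
      Ideal.span {f | f ∈ supported K t ∧ f ∈ vanishingIdeal K W} := by
  classical
  set a : (σ →₀ ℕ) → MvPolynomial σ K := fun d => monomial (d.filter (· ∈ s)) (coeff d g)
  set b : (σ →₀ ℕ) → MvPolynomial σ K := fun d => monomial (d.filter (· ∉ s)) 1
  have ha : ∀ d, a d ∈ supported K s := fun d =>
    monomial_mem_supported (fun v hv => (Finset.mem_filter.mp hv).2) _
  have hb : ∀ d ∈ g.support, b d ∈ supported K t := by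
    intro d hd
    refine monomial_mem_supported (fun v hv => ?_) _
    obtain ⟨hvd, hvs⟩ := Finset.mem_filter.mp hv
    exact (mem_supported.mp hg ((mem_vars_iff_mem_support v).mpr ⟨d, hd, hvd⟩)).resolve_left hvs
  have hN : ∀ y : W, ∑ d ∈ g.support, eval y.1 (b d) • a d ∈
      Subalgebra.toSubmodule (supported K s) ⊓ (vanishingIdeal K V).restrictScalars K := by
    refine fun y => ⟨Submodule.sum_mem _ fun d _ => Submodule.smul_mem _ _ (ha d), fun x hx => ?_⟩
    obtain ⟨z, hxz, hyz, hz⟩ := hVW x hx y.1 y.2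
    calc eval x (∑ d ∈ g.support, eval y.1 (b d) • a d)
        = eval z (∑ d ∈ g.support, a d * b d) := by
          simp only [map_sum, map_mul, smul_eval]
          refine Finset.sum_congr rfl fun d hd => ?_
          rw [eval_eq_of_eqOn (ha d) hxz, eval_eq_of_eqOn (hb d hd) hyz, mul_comm]
      _ = 0 := by rw [sum_monomial_filter_mul_monomial_filter, hz]
  have key := sum_mul_mem_span_sup_span _ (Subalgebra.toSubmodule (supported K t))
    (fun y : W => (aeval y.1).toLinearMap) a g.support b hb hN
  have hW : {f | f ∈ Subalgebra.toSubmodule (supported K t) ∧ ∀ y : W, aeval y.1 f = 0} =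
      {f | f ∈ supported K t ∧ f ∈ vanishingIdeal K W} := by
    ext f
    simp
  rw [sum_monomial_filter_mul_monomial_filter] at key
  convert key using 2
  · rfl
  · exact congrArg Ideal.span hW.symm

end MvPolynomial

namespace Matrix

variable {m R : Type*} [Fintype m] [DecidableEq m] [CommRing R]

theorem det_one_sub_eq_one [LinearOrder m] {Λ : Matrix m m R} (hΛ : ∀ i j, ¬ i < j → Λ i j = 0) :
    (1 - Λ).det = 1 := by
  rw [det_of_isUpperTriangular]
  · simp [hΛ]
  · intro i j hji
    simp [one_apply_ne (ne_of_gt (show j < i from hji)), hΛ i j (not_lt_of_gt hji)]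

theorem inv_mul_eq_mul_inv_of_mul_eq {M M' Q : Matrix m m R} (hM : IsUnit M.det)
    (hM' : IsUnit M'.det) (hQ : Commute Q M) (h : M * Q = M' * Q) : M'⁻¹ * Q = Q * M⁻¹ :=
  calc M'⁻¹ * Q = M'⁻¹ * (Q * M) * M⁻¹ := by
        rw [Matrix.mul_assoc, Matrix.mul_assoc, mul_nonsing_inv _ hM, Matrix.mul_one]
    _ = Q * M⁻¹ := by
        rw [hQ.eq, h, ← Matrix.mul_assoc, nonsing_inv_mul _ hM', Matrix.one_mul]

variable {B : Set m} {M M' : Matrix m m R}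

theorem commute_diagonal_of_block [DecidablePred (· ∈ B)]
    (hM : ∀ i j, ¬ (i ∈ B ↔ j ∈ B) → M i j = 0) :
    Commute (diagonal fun i => if i ∈ B then 1 else 0) M := by
  ext i j
  by_cases hi : i ∈ B <;> by_cases hj : j ∈ B <;> simp [diagonal_mul, mul_diagonal, hi, hj, hM i j]

theorem inv_apply_eq_zero_of_block (hdet : IsUnit M.det)
    (hM : ∀ i j, ¬ (i ∈ B ↔ j ∈ B) → M i j = 0) {a i : m} (hai : ¬ (a ∈ B ↔ i ∈ B)) :
    M⁻¹ a i = 0 := by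
  classical
  have := congr_fun₂ (inv_mul_eq_mul_inv_of_mul_eq hdet hdet (commute_diagonal_of_block hM) rfl) a i
  by_cases ha : a ∈ B <;> by_cases hi : i ∈ B <;> simp_all [diagonal_mul, mul_diagonal]

theorem inv_apply_eq_of_block (hdet : IsUnit M.det) (hdet' : IsUnit M'.det)
    (hM : ∀ i j, ¬ (i ∈ B ↔ j ∈ B) → M i j = 0) (hcol : ∀ a, ∀ i ∈ B, M a i = M' a i)
    (a : m) {i : m} (hi : i ∈ B) : M⁻¹ a i = M'⁻¹ a i := by
  classical
  have hQ : M * diagonal (fun i => if i ∈ B then 1 else 0) =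
      M' * diagonal (fun i => if i ∈ B then 1 else 0) := by
    ext a j
    by_cases hj : j ∈ B <;> simp [mul_diagonal, hj, hcol a j]
  have := congr_fun₂ (inv_mul_eq_mul_inv_of_mul_eq hdet hdet' (commute_diagonal_of_block hM) hQ) a i
  by_cases ha : a ∈ B
  · simpa [diagonal_mul, mul_diagonal, ha, hi] using this.symm
  · simp_all [diagonal_mul, mul_diagonal, inv_apply_eq_zero_of_block hdet hM (a := a) (i := i)]

end Matrix

namespace LNG

variable {n : ℕ}

theorem Supported.mono {E E' : Fin n → Fin n → Prop} {Λ : Matrix (Fin n) (Fin n) ℝ}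
    (h : Supported E Λ) (hE : ∀ i j, E i j → E' i j) : Supported E' Λ :=
  fun i j h' => h i j (mt (hE i j) h')

theorem momentS_apply (Λ : Matrix (Fin n) (Fin n) ℝ) (ω : Fin n → ℝ) (i j : Fin n) :
    momentS Λ ω i j = ∑ a, ω a * (1 - Λ)⁻¹ a i * (1 - Λ)⁻¹ a j := by
  rw [momentS, mul_apply]
  refine Finset.sum_congr rfl fun a _ => ?_
  rw [mul_diagonal, transpose_apply]
  ring

section Block

variable {B : Set (Fin n)} {Λ Λ' : Matrix (Fin n) (Fin n) ℝ}

theorem isUnit_det_one_sub (h : Supported (· < ·) Λ) : IsUnit (1 - Λ).det := by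
  rw [det_one_sub_eq_one h]
  exact isUnit_one

theorem one_sub_apply_eq_zero (hB : Supported (fun i j => i ∈ B ↔ j ∈ B) Λ) {i j : Fin n}
    (hij : ¬ (i ∈ B ↔ j ∈ B)) : (1 - Λ) i j = 0 := by
  rw [Matrix.sub_apply, one_apply_ne (by rintro rfl; exact hij Iff.rfl), hB i j hij, sub_zero]

theorem evalVar_moment_eqOn (hΛ : Supported (· < ·) Λ) (hΛ' : Supported (· < ·) Λ')
    (hB : Supported (fun i j => i ∈ B ↔ j ∈ B) Λ) (hcol : ∀ a, ∀ i ∈ B, Λ a i = Λ' a i)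
    {ω₂ ω₂' ω₃ ω₃' : Fin n → ℝ} (h₂ : B.EqOn ω₂ ω₂') (h₃ : B.EqOn ω₃ ω₃') :
    (varsIn B).EqOn (evalVar (momentS Λ ω₂) (momentT Λ ω₃))
      (evalVar (momentS Λ' ω₂') (momentT Λ' ω₃')) := by
  have hN : ∀ a, ∀ i ∈ B, (1 - Λ)⁻¹ a i = (1 - Λ')⁻¹ a i := fun a i hi =>
    inv_apply_eq_of_block (isUnit_det_one_sub hΛ) (isUnit_det_one_sub hΛ')
      (fun _ _ => one_sub_apply_eq_zero hB) (fun a i hi => by simp [hcol a i hi]) a hi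
  -- outside `B` the columns `i ∈ B` of `(1 - Λ)⁻¹` vanish, so the weights only matter on `B`
  have hωN : ∀ {ω ω' : Fin n → ℝ}, B.EqOn ω ω' →
      ∀ a, ∀ i ∈ B, ω a * (1 - Λ)⁻¹ a i = ω' a * (1 - Λ')⁻¹ a i := by
    intro ω ω' hω a i hi
    by_cases ha : a ∈ B
    · rw [hω ha, hN a i hi]
    · rw [← hN a i hi, inv_apply_eq_zero_of_block (isUnit_det_one_sub hΛ)
        (fun _ _ => one_sub_apply_eq_zero hB) (by tauto), mul_zero, mul_zero]
  rintro (⟨⟨i, j⟩, _⟩ | ⟨⟨i, j, k⟩, _⟩) hv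
  · obtain ⟨hi, hj⟩ := hv
    simp only [evalVar, momentS_apply]
    exact Finset.sum_congr rfl fun a _ => by rw [hωN h₂ a i hi, hN a j hj]
  · obtain ⟨hi, hj, hk⟩ := hv
    simp only [evalVar, momentT]
    exact Finset.sum_congr rfl fun a _ => by rw [hωN h₃ a i hi, hN a j hj, hN a k hk]

theorem evalVar_moment_eq_zero (hΛ : Supported (· < ·) Λ)
    (hB : Supported (fun i j => i ∈ B ↔ j ∈ B) Λ) (ω₂ ω₃ : Fin n → ℝ) {v : MomVar n}
    (hv : v ∉ varsIn B ∪ varsIn Bᶜ) : evalVar (momentS Λ ω₂) (momentT Λ ω₃) v = 0 := by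
  have hN : ∀ a i j, ¬ (i ∈ B ↔ j ∈ B) → (1 - Λ)⁻¹ a i * (1 - Λ)⁻¹ a j = 0 := by
    intro a i j hij
    have h0 : ∀ {x y}, ¬ (x ∈ B ↔ y ∈ B) → (1 - Λ)⁻¹ x y = 0 := fun hxy =>
      inv_apply_eq_zero_of_block (isUnit_det_one_sub hΛ) (fun _ _ => one_sub_apply_eq_zero hB) hxy
    by_cases hai : a ∈ B ↔ i ∈ B
    · rw [h0 (x := a) (y := j) (by tauto), mul_zero]
    · rw [h0 hai, zero_mul]
  rcases v with ⟨⟨i, j⟩, _⟩ | ⟨⟨i, j, k⟩, _⟩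
  · simp only [varsIn, Set.mem_union, Set.mem_ofPred_eq, Set.mem_compl_iff, not_or] at hv
    simp only [evalVar, momentS_apply]
    exact Finset.sum_eq_zero fun a _ => by rw [mul_assoc, hN a i j (by tauto), mul_zero]
  · simp only [varsIn, Set.mem_union, Set.mem_ofPred_eq, Set.mem_compl_iff, not_or] at hv
    simp only [evalVar, momentT]
    by_cases hij : i ∈ B ↔ j ∈ B
    · exact Finset.sum_eq_zero fun a _ => by rw [mul_assoc, hN a j k (by tauto), mul_zero]
    · exact Finset.sum_eq_zero fun a _ => by
        rw [mul_assoc (ω₃ a), hN a i j hij, mul_zero, zero_mul]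

end Block

section Models

variable {E : Fin n → Fin n → Prop}

theorem MomentModel.restrict (hE : ∀ i j, E i j → i < j) {B : Set (Fin n)}
    (hB : ∀ i j, E i j → (i ∈ B ↔ j ∈ B)) {S : Matrix (Fin n) (Fin n) ℝ}
    {T : Fin n → Fin n → Fin n → ℝ} (h : MomentModel E S T) :
    ∃ S' T', MomentModel (fun i j => E i j ∧ i ∈ B ∧ j ∈ B) S' T' ∧
      (varsIn B).EqOn (evalVar S T) (evalVar S' T') := by
  classical
  obtain ⟨Λ, ω₂, ω₃, hΛ, hpos, rfl, rfl⟩ := h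
  set Λ' : Matrix (Fin n) (Fin n) ℝ := of fun i j => if i ∈ B ∧ j ∈ B then Λ i j else 0
  have hΛ' : Supported (fun i j => E i j ∧ i ∈ B ∧ j ∈ B) Λ' := by
    intro i j hij
    by_cases hm : i ∈ B ∧ j ∈ B
    · simp [Λ', hm, hΛ i j fun he => hij ⟨he, hm⟩]
    · simp [Λ', hm]
  refine ⟨_, _, ⟨Λ', ω₂, ω₃, hΛ', hpos, rfl, rfl⟩, evalVar_moment_eqOn (hΛ.mono hE)
    (hΛ'.mono fun i j h => hE i j h.1) (hΛ.mono hB) (fun a i hi => ?_) (Set.eqOn_refl _ _)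
    (Set.eqOn_refl _ _)⟩
  by_cases ha : a ∈ B
  · simp [Λ', ha, hi]
  · simp [Λ', ha, hΛ a i fun he => ha ((hB a i he).mpr hi)]

theorem MomentModel.glue (hE : ∀ i j, E i j → i < j) {A : Set (Fin n)}
    (hsplit : ∀ i j, E i j → (i ∈ A ↔ j ∈ A)) {S₁ S₂ : Matrix (Fin n) (Fin n) ℝ}
    {T₁ T₂ : Fin n → Fin n → Fin n → ℝ}
    (h₁ : MomentModel (fun i j => E i j ∧ i ∈ A ∧ j ∈ A) S₁ T₁)
    (h₂ : MomentModel (fun i j => E i j ∧ i ∉ A ∧ j ∉ A) S₂ T₂) :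
    ∃ S T, MomentModel E S T ∧ (varsIn A).EqOn (evalVar S₁ T₁) (evalVar S T) ∧
      (varsIn Aᶜ).EqOn (evalVar S₂ T₂) (evalVar S T) := by
  classical
  obtain ⟨Λ₁, α₂, α₃, hΛ₁, hpos₁, rfl, rfl⟩ := h₁
  obtain ⟨Λ₂, β₂, β₃, hΛ₂, hpos₂, rfl, rfl⟩ := h₂
  set Λ : Matrix (Fin n) (Fin n) ℝ := of fun i j => if i ∈ A then Λ₁ i j else Λ₂ i j
  have hΛ : Supported E Λ := by
    intro i j hij
    by_cases hi : i ∈ A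
    · simp [Λ, hi, hΛ₁ i j fun h => hij h.1]
    · simp [Λ, hi, hΛ₂ i j fun h => hij h.1]
  refine ⟨_, _, ⟨Λ, A.piecewise α₂ β₂, A.piecewise α₃ β₃, hΛ, fun i => ?_, rfl, rfl⟩,
    (evalVar_moment_eqOn (hΛ.mono hE) (hΛ₁.mono fun i j h => hE i j h.1) (hΛ.mono hsplit)
      (fun a i hi => ?_) (A.piecewise_eqOn _ _) (A.piecewise_eqOn _ _)).symm,
    (evalVar_moment_eqOn (hΛ.mono hE) (hΛ₂.mono fun i j h => hE i j h.1)
      (hΛ.mono fun i j h => not_congr (hsplit i j h)) (fun a i hi => ?_)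
      (A.piecewise_eqOn_compl _ _) (A.piecewise_eqOn_compl _ _)).symm⟩
  · by_cases hi : i ∈ A <;> simp [hi, hpos₁ i, hpos₂ i]
  · by_cases ha : a ∈ A
    · simp [Λ, ha]
    · simp [Λ, ha, hΛ₁ a i fun h => ha h.2.1, hΛ₂ a i fun h => h.2.2 hi]
  · by_cases ha : a ∈ A
    · simp [Λ, ha, hΛ₁ a i fun h => hi h.2.2, hΛ₂ a i fun h => h.2.1 ha]
    · simp [Λ, ha]

end Models

def modelPoints (E : Fin n → Fin n → Prop) : Set (MomVar n → ℝ) :=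
  {x | ∃ S T, MomentModel E S T ∧ evalVar S T = x}

theorem momentIdeal_eq_vanishingIdeal (E : Fin n → Fin n → Prop) :
    momentIdeal E = vanishingIdeal ℝ (modelPoints E) := by
  ext f
  exact ⟨fun h x ⟨S, T, hST, hx⟩ => hx ▸ h S T hST, fun h S T hST => h _ ⟨S, T, hST, rfl⟩⟩

theorem mixed_generators_eq_image_X (A : Set (Fin n)) :
    {f : MvPolynomial (MomVar n) ℝ | ∃ i j, i ∈ A ∧ j ∉ A ∧ (f = svar i j ∨ ∃ k, f = tvar i k j)}
      = X '' (varsIn A ∪ varsIn Aᶜ)ᶜ := by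
  ext f
  constructor
  · rintro ⟨i, j, hi, hj, rfl | ⟨k, rfl⟩⟩ <;> refine ⟨_, ?_, rfl⟩ <;>
      simp only [varsIn, Set.mem_compl_iff, Set.mem_union, not_or, Set.mem_ofPred_eq]
    · rcases le_total i j with h | h <;> simp [h, hi, hj]
    · -- the sorted triple is a rearrangement of `(i, k, j)`
      unfold mid3
      grind
  · rintro ⟨v, hv, rfl⟩
    rcases v with ⟨⟨p, q⟩, hpq⟩ | ⟨⟨p, q, r⟩, hpq, hqr⟩ <;>
      simp only [varsIn, Set.mem_compl_iff, Set.mem_union, not_or, Set.mem_ofPred_eq] at hv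
    · by_cases hp : p ∈ A
      · exact ⟨p, q, hp, by tauto, Or.inl (by simp [svar, hpq])⟩
      · exact ⟨q, p, by tauto, hp, Or.inl (by simp [svar, hpq])⟩
    · by_cases hp : p ∈ A <;> by_cases hq : q ∈ A
      · exact ⟨p, r, hp, by tauto, Or.inr ⟨q, by simp [tvar, mid3, hpq, hqr, hpq.trans hqr]⟩⟩
      · exact ⟨p, q, hp, hq, Or.inr ⟨r, by simp [tvar, mid3, hpq, hqr, hpq.trans hqr]⟩⟩
      · exact ⟨q, p, hq, hp, Or.inr ⟨r, by simp [tvar, mid3, hpq, hqr, hpq.trans hqr]⟩⟩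
      · exact ⟨r, p, by tauto, hp, Or.inr ⟨q, by simp [tvar, mid3, hpq, hqr, hpq.trans hqr]⟩⟩

section Ideals

variable {E : Fin n → Fin n → Prop}

theorem span_supported_momentIdeal_le (hE : ∀ i j, E i j → i < j) {B : Set (Fin n)}
    (hB : ∀ i j, E i j → (i ∈ B ↔ j ∈ B)) :
    Ideal.span {f | f ∈ supported ℝ (varsIn B) ∧
      f ∈ momentIdeal (fun i j => E i j ∧ i ∈ B ∧ j ∈ B)} ≤ momentIdeal E := by
  rw [Ideal.span_le]
  rintro f ⟨hfB, hf⟩ S T hST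
  obtain ⟨S', T', hST', hSS'⟩ := hST.restrict hE hB
  rw [eval_eq_of_eqOn hfB hSS']
  exact hf S' T' hST'

theorem span_X_mixed_le_momentIdeal (hE : ∀ i j, E i j → i < j) {A : Set (Fin n)}
    (hsplit : ∀ i j, E i j → (i ∈ A ↔ j ∈ A)) :
    Ideal.span (X '' (varsIn A ∪ varsIn Aᶜ)ᶜ) ≤ momentIdeal E := by
  rw [Ideal.span_le]
  rintro _ ⟨v, hv, rfl⟩ S T ⟨Λ, ω₂, ω₃, hΛ, -, rfl, rfl⟩
  rw [eval_X]
  exact evalVar_moment_eq_zero (hΛ.mono hE) (hΛ.mono hsplit) ω₂ ω₃ hv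

end Ideals

/-- If the DAG `G` is the disjoint union of the two induced subgraphs on
`A` and on `Aᶜ`, then `I^{≤3}(G) = I^{≤3}(G₁) + I^{≤3}(G₂) + ⟨s_{ij}, t_{ikj} : i ∈ V(G₁),
j ∈ V(G₂), k ∈ V⟩`, where the component ideals are taken in the variables indexed within
the respective component. -/
theorem disjoint_union_ideal (n : ℕ) (E : Fin n → Fin n → Prop)
    (hE : ∀ i j : Fin n, E i j → i < j)
    (A : Set (Fin n)) (hsplit : ∀ i j : Fin n, E i j → (i ∈ A ↔ j ∈ A)) :
    momentIdeal E =
      Ideal.span {f : MvPolynomial (MomVar n) ℝ |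
          f ∈ MvPolynomial.supported ℝ (varsIn A) ∧
          f ∈ momentIdeal (fun i j => E i j ∧ i ∈ A ∧ j ∈ A)} +
      Ideal.span {f : MvPolynomial (MomVar n) ℝ |
          f ∈ MvPolynomial.supported ℝ (varsIn Aᶜ) ∧
          f ∈ momentIdeal (fun i j => E i j ∧ i ∉ A ∧ j ∉ A)} +
      Ideal.span {f : MvPolynomial (MomVar n) ℝ |
          ∃ i j, i ∈ A ∧ j ∉ A ∧ (f = svar i j ∨ ∃ k, f = tvar i k j)} := by
  have hsplit' : ∀ i j, E i j → (i ∈ Aᶜ ↔ j ∈ Aᶜ) := fun i j h => not_congr (hsplit i j h)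
  rw [mixed_generators_eq_image_X]
  refine le_antisymm (fun f hf => ?_) (sup_le (sup_le (span_supported_momentIdeal_le hE hsplit)
    (span_supported_momentIdeal_le hE hsplit')) (span_X_mixed_le_momentIdeal hE hsplit))
  obtain ⟨g, hg, hfg⟩ := exists_mem_supported_sub_mem_span_X_compl (varsIn A ∪ varsIn Aᶜ) f
  have hgE : g ∈ momentIdeal E := by
    simpa using sub_mem hf (span_X_mixed_le_momentIdeal hE hsplit hfg)
  have hg₁₂ := mem_span_supported_vanishingIdeal_sup hg
    (V := modelPoints fun i j => E i j ∧ i ∈ A ∧ j ∈ A)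
    (W := modelPoints fun i j => E i j ∧ i ∉ A ∧ j ∉ A) <| by
      rintro _ ⟨S₁, T₁, h₁, rfl⟩ _ ⟨S₂, T₂, h₂, rfl⟩
      obtain ⟨S, T, hST, e₁, e₂⟩ := MomentModel.glue hE hsplit h₁ h₂
      exact ⟨_, e₁, e₂, hgE S T hST⟩
  rw [← momentIdeal_eq_vanishingIdeal, ← momentIdeal_eq_vanishingIdeal] at hg₁₂
  rw [← sub_add_cancel f g]
  exact add_mem (Submodule.mem_sup_right hfg) (Submodule.mem_sup_left hg₁₂)

end LNG
end

section
/- Let G be a polytree (a DAG whose underlying undirected graph is a tree). Then for any k≥1 and any vertices i₁,…,i_k of G, there exists at most one simple k-trek between i₁,…,i_k; in particular the top vertex top(i₁,…,i_k) is well defined whenever a k-trek between i₁,…,i_k exists. -/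
open MvPolynomial Matrix Finset

namespace LNG

variable {n : ℕ}

/-!
In a polytree, take two simple treks between the same vertices, with tops `v` and `v'`. For each
index `r`, following the `r`-th path from `v` until it first meets the `r`-th path from `v'`
yields, in the underlying tree, the path from `v` to `v'` with the meeting point as its largest
vertex in the topological order. The tree path from `v` to `v'` is unique, so the meeting point
is the same for every `r`: it lies on all paths of both treks, hence equals `v` and `v'` by
simplicity. The paths themselves then coincide, again by uniqueness of paths in a tree.
-/

theorem _root_.SimpleGraph.IsAcyclic.eq_of_isPath_of_forall_le {V : Type*} [LinearOrder V]
    {G : SimpleGraph V} (hG : G.IsAcyclic) {u v m m' : V} {W W' : G.Walk u v}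
    (hW : W.IsPath) (hW' : W'.IsPath) (hm : m ∈ W.support) (hm' : m' ∈ W'.support)
    (hle : ∀ x ∈ W.support, x ≤ m) (hle' : ∀ x ∈ W'.support, x ≤ m') : m = m' := by
  obtain rfl : W = W' :=
    congrArg Subtype.val ((hG.subsingleton_path u v).elim ⟨W, hW⟩ ⟨W', hW'⟩)
  exact le_antisymm (hle' m hm) (hle m' hm')

theorem _root_.List.exists_eq_append_first_mem {α : Type*} {p q : List α}
    (h : ∃ x ∈ p, x ∈ q) :
    ∃ l m t, p = l ++ m :: t ∧ m ∈ q ∧ ∀ x ∈ l, x ∉ q := by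
  classical
  obtain ⟨m, hfind⟩ := Option.isSome_iff_exists.mp <|
    (List.find?_isSome (p := fun x => decide (x ∈ q))).mpr (by simpa using h)
  obtain ⟨hmq, l, t, hp, hl⟩ := List.find?_eq_some_iff_append.mp hfind
  exact ⟨l, m, t, hp, by simpa using hmq, by simpa using hl⟩

variable {E : Fin n → Fin n → Prop}

theorem isDiPath_iff {p : List (Fin n)} : IsDiPath E p ↔ p ≠ [] ∧ p.IsChain E := by
  induction p using List.twoStepInduction with
  | nil => simp [IsDiPath]
  | singleton a => simp [IsDiPath]
  | cons_cons a b l _ ih => simp [IsDiPath, ih, List.isChain_cons_cons]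

namespace IsPathFromTo

variable {v i : Fin n} {p : List (Fin n)}

theorem exists_support_eq (hE : ∀ a, ¬ E a a) (h : IsPathFromTo E v p i) :
    ∃ W : (underlying E).Walk v i, W.support = p := by
  induction p generalizing v with
  | nil => exact h.1.elim
  | cons a p ih =>
    obtain rfl : a = v := by simpa using h.2.1
    cases p with
    | nil =>
      obtain rfl : a = i := by simpa using h.2.2
      exact ⟨.nil, rfl⟩
    | cons b l =>
      obtain ⟨hab, hp⟩ := h.1
      obtain ⟨W, hW⟩ := ih ⟨hp, rfl, by simpa using h.2.2⟩
      have hadj : (underlying E).Adj a b := ⟨by rintro rfl; exact hE a hab, Or.inl hab⟩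
      exact ⟨.cons hadj W, by simp [hW]⟩

theorem pairwise_lt (hE : ∀ a b, E a b → a < b) (h : IsPathFromTo E v p i) :
    p.Pairwise (· < ·) :=
  List.isChain_iff_pairwise.mp ((isDiPath_iff.mp h.1).2.imp hE)

theorem le_sink (hE : ∀ a b, E a b → a < b) (h : IsPathFromTo E v p i) :
    ∀ x ∈ p, x ≤ i := by
  obtain ⟨l, rfl⟩ := List.getLast?_eq_some_iff.mp h.2.2
  have hlt := List.pairwise_append.mp (h.pairwise_lt hE)
  intro x hx
  rcases List.mem_append.mp hx with hx | hx
  · exact (hlt.2.2 x hx i (List.mem_singleton_self i)).le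
  · exact (List.mem_singleton.mp hx).le

theorem take_of_eq_append {l t : List (Fin n)} {m : Fin n} (h : IsPathFromTo E v p i)
    (hp : p = l ++ m :: t) : IsPathFromTo E v (l ++ [m]) m := by
  subst hp
  refine ⟨isDiPath_iff.mpr ⟨by simp, ?_⟩, ?_, List.getLast?_concat⟩
  · exact List.IsChain.left_of_append (l₂ := t) (by simpa using (isDiPath_iff.mp h.1).2)
  · cases l <;> simpa using h.2.1

theorem eq_of_isAcyclic (hE : ∀ a b, E a b → a < b) (hA : (underlying E).IsAcyclic)
    {q : List (Fin n)} (hp : IsPathFromTo E v p i) (hq : IsPathFromTo E v q i) : p = q := by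
  have hirr : ∀ a, ¬ E a a := fun a ha => lt_irrefl a (hE a a ha)
  obtain ⟨W, rfl⟩ := hp.exists_support_eq hirr
  obtain ⟨W', rfl⟩ := hq.exists_support_eq hirr
  have hW : W.IsPath := SimpleGraph.Walk.isPath_def _ |>.mpr (hp.pairwise_lt hE).nodup
  have hW' : W'.IsPath := SimpleGraph.Walk.isPath_def _ |>.mpr (hq.pairwise_lt hE).nodup
  obtain rfl : W = W' :=
    congrArg Subtype.val ((hA.subsingleton_path v i).elim ⟨W, hW⟩ ⟨W', hW'⟩)
  rfl

theorem exists_isPath_of_common_sink (hE : ∀ a b, E a b → a < b) {v' : Fin n}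
    {q : List (Fin n)} (hp : IsPathFromTo E v p i) (hq : IsPathFromTo E v' q i) :
    ∃ m ∈ p, m ∈ q ∧ ∃ W : (underlying E).Walk v v',
      W.IsPath ∧ m ∈ W.support ∧ ∀ x ∈ W.support, x ≤ m := by
  have hirr : ∀ a, ¬ E a a := fun a ha => lt_irrefl a (hE a a ha)
  obtain ⟨l, m, t, hp_eq, hmq, hl⟩ := List.exists_eq_append_first_mem
    ⟨i, List.mem_of_getLast? hp.2.2, List.mem_of_getLast? hq.2.2⟩
  obtain ⟨s, t', hq_eq⟩ := List.append_of_mem hmq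
  have ha := hp.take_of_eq_append hp_eq
  have hb := hq.take_of_eq_append hq_eq
  obtain ⟨Wa, hWa⟩ := ha.exists_support_eq hirr
  obtain ⟨Wb, hWb⟩ := hb.exists_support_eq hirr
  have hsupp : (Wa.append Wb.reverse).support = l ++ m :: s.reverse := by
    simp [SimpleGraph.Walk.support_append, hWa, hWb]
  refine ⟨m, by simp [hp_eq], hmq, Wa.append Wb.reverse, ?_, by simp [hsupp], ?_⟩
  · have hpn := hp_eq ▸ (hp.pairwise_lt hE).nodup
    have hqn := hq_eq ▸ (hq.pairwise_lt hE).nodup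
    rw [SimpleGraph.Walk.isPath_def, hsupp]
    simp only [List.nodup_append, List.nodup_cons, List.nodup_reverse] at hpn hqn ⊢
    have hms : m ∉ s := fun hms => hqn.2.2 m hms m List.mem_cons_self rfl
    refine ⟨hpn.1, ⟨by simpa using hms, hqn.1⟩, ?_⟩
    rintro a hal _ hb rfl
    apply hl a hal
    simp only [List.mem_cons, List.mem_reverse] at hb
    rcases hb with rfl | hb
    · exact hmq
    · simp [hq_eq, hb]
  · rw [hsupp]
    intro x hx
    simp only [List.mem_append, List.mem_cons, List.mem_reverse] at hx
    rcases hx with hx | rfl | hx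
    · exact ha.le_sink hE x (by simp [hx])
    · exact le_rfl
    · exact hb.le_sink hE x (by simp [hx])

end IsPathFromTo

/-- In a polytree there is at most one simple `k`-trek between any
given vertices `i₁, …, i_k` (`k ≥ 1`); in particular the top is well defined. -/
theorem unique_simple_trek (n : ℕ) (E : Fin n → Fin n → Prop) (hG : IsPolytree E)
    (k : ℕ) (hk : 1 ≤ k) (i : Fin k → Fin n) (v v' : Fin n)
    (P P' : Fin k → List (Fin n))
    (h : IsSimpleTrek E v P i) (h' : IsSimpleTrek E v' P' i) :
    v = v' ∧ P = P' := by
  obtain ⟨⟨hP, hv⟩, hP', hv'⟩ := h, h'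
  have hA : (underlying E).IsAcyclic := hG.2.isAcyclic
  choose m hmP hmP' W hW hmW hle using
    fun r => (hP r).exists_isPath_of_common_sink hG.1 (hP' r)
  let r₀ : Fin k := ⟨0, hk⟩
  have hm : ∀ r, m r = m r₀ := fun r =>
    hA.eq_of_isPath_of_forall_le (hW r) (hW r₀) (hmW r) (hmW r₀) (hle r) (hle r₀)
  obtain rfl : m r₀ = v := hv _ fun r => hm r ▸ hmP r
  obtain rfl : m r₀ = v' := hv' _ fun r => hm r ▸ hmP' r
  exact ⟨rfl, funext fun r => (hP r).eq_of_isAcyclic hG.1 hA (hP' r)⟩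

end LNG
end

section
/- Let φ : ℝ[s₁₁,s₁₂,s₂₂,t₁₁₁,t₁₁₂,t₁₂₂,t₂₂₂] → ℝ[ω₁,ω₂,ν₁,ν₂,λ] be the ring homomorphism given by s₁₁ ↦ ω₁, s₁₂ ↦ λω₁, s₂₂ ↦ ω₂ + λ²ω₁, t₁₁₁ ↦ ν₁, t₁₁₂ ↦ λν₁, t₁₂₂ ↦ λ²ν₁, t₂₂₂ ↦ ν₂ + λ³ν₁. Then ker φ is generated by the three binomials s₁₂t₁₁₁ − s₁₁t₁₁₂, s₁₂t₁₁₂ − s₁₁t₁₂₂ and t₁₁₁t₁₂₂ − t₁₁₂², i.e., by the 2×2 minors of the matrix with rows (s₁₁, t₁₁₁, t₁₁₂) and (s₁₂, t₁₁₂, t₁₂₂). -/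
open MvPolynomial

/-- The moment variables `s₁₁, s₁₂, s₂₂, t₁₁₁, t₁₁₂, t₁₂₂, t₂₂₂`. -/
inductive MomVar2 : Type
  | s11 | s12 | s22 | t111 | t112 | t122 | t222

/-- The parameter variables `ω₁, ω₂, ν₁, ν₂, λ`. -/
inductive ParamVar2 : Type
  | w1 | w2 | v1 | v2 | lam

/-- The ring homomorphism `φ` of the two-vertex DAG `1 → 2`:
`s₁₁ ↦ ω₁`, `s₁₂ ↦ λω₁`, `s₂₂ ↦ ω₂ + λ²ω₁`, `t₁₁₁ ↦ ν₁`, `t₁₁₂ ↦ λν₁`,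
`t₁₂₂ ↦ λ²ν₁`, `t₂₂₂ ↦ ν₂ + λ³ν₁`. -/
noncomputable def phi : MvPolynomial MomVar2 ℝ →ₐ[ℝ] MvPolynomial ParamVar2 ℝ :=
  aeval fun v => match v with
    | .s11 => X .w1
    | .s12 => X .lam * X .w1
    | .s22 => X .w2 + X .lam ^ 2 * X .w1
    | .t111 => X .v1
    | .t112 => X .lam * X .v1
    | .t122 => X .lam ^ 2 * X .v1
    | .t222 => X .v2 + X .lam ^ 3 * X .v1


deriving instance DecidableEq for MomVar2

abbrev PP := MvPolynomial MomVar2 ℝ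
noncomputable def g1 : PP := X .s12 * X .t111 - X .s11 * X .t112
noncomputable def g2 : PP := X .s12 * X .t112 - X .s11 * X .t122
noncomputable def g3 : PP := X .t111 * X .t122 - X .t112 ^ 2
noncomputable def II : Ideal PP := Ideal.span {g1, g2, g3}
lemma g1_mem : g1 ∈ II := Ideal.subset_span (by simp)
lemma g2_mem : g2 ∈ II := Ideal.subset_span (by simp)
lemma g3_mem : g3 ∈ II := Ideal.subset_span (by simp)
lemma mem_II_iff {z : PP} : z ∈ II ↔ ∃ A B C : PP, z = A * g1 + B * g2 + C * g3 := by
  constructor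
  · intro h
    rw [II, Ideal.mem_span_insert] at h
    obtain ⟨A, z1, hz1, rfl⟩ := h
    rw [Ideal.mem_span_insert] at hz1
    obtain ⟨B, z2, hz2, rfl⟩ := hz1
    rw [Ideal.mem_span_singleton'] at hz2
    obtain ⟨C, hC⟩ := hz2
    exact ⟨A, B, C, by rw [← hC]; ring⟩
  · rintro ⟨A, B, C, rfl⟩
    exact add_mem (add_mem (Ideal.mul_mem_left _ _ g1_mem) (Ideal.mul_mem_left _ _ g2_mem))
      (Ideal.mul_mem_left _ _ g3_mem)
noncomputable def kill (u : MomVar2) : PP →ₐ[ℝ] PP :=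
  aeval (fun v => if v = u then 0 else X v)
@[simp] lemma kill_X_self (u : MomVar2) : kill u (X u) = 0 := by simp [kill]
@[simp] lemma kill_X (u v : MomVar2) (h : v ≠ u) : kill u (X v) = X v := by simp [kill, h]
lemma X_dvd_sub_kill (u : MomVar2) (q : PP) : (X u : PP) ∣ q - kill u q := by
  induction q using MvPolynomial.induction_on with
  | C c => simp [kill]
  | add p q hp hq =>
      have h := dvd_add hp hq
      rw [map_add]
      have e : p + q - (kill u p + kill u q) = p - kill u p + (q - kill u q) := by ring
      rwa [e]
  | mul_X p v hp =>
      rw [map_mul]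
      by_cases h : v = u
      · subst h
        rw [kill_X_self, mul_zero, sub_zero]
        exact dvd_mul_left _ _
      · rw [kill_X _ _ h]
        have e : p * X v - kill u p * X v = (p - kill u p) * X v := by ring
        rw [e]
        exact hp.mul_right _
lemma X_dvd_of_kill_eq_zero {u : MomVar2} {q : PP} (h : kill u q = 0) : (X u : PP) ∣ q := by
  have := X_dvd_sub_kill u q
  rwa [h, sub_zero] at this

-- new part
lemma g3_ne_zero : (X MomVar2.t111 * X MomVar2.t122 - X MomVar2.t112 ^ 2 : PP) ≠ 0 := by
  intro h
  have := congrArg (eval (fun v => if v = MomVar2.t112 then (0:ℝ) else 1)) h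
  simp at this

lemma colon {q : PP} (h : X MomVar2.s11 * q ∈ II) : q ∈ II := by
  rw [mem_II_iff] at h
  obtain ⟨A, B, C, hE⟩ := h
  simp only [g1, g2, g3] at hE
  obtain ⟨A1, hA1⟩ := X_dvd_sub_kill .s11 A
  obtain ⟨B1, hB1⟩ := X_dvd_sub_kill .s11 B
  obtain ⟨C1, hC1⟩ := X_dvd_sub_kill .s11 C
  -- apply kill s11
  have hE0 : kill .s11 A * (X MomVar2.s12 * X MomVar2.t111)
      + kill .s11 B * (X MomVar2.s12 * X MomVar2.t112)
      + kill .s11 C * (X MomVar2.t111 * X MomVar2.t122 - X MomVar2.t112 ^ 2) = 0 := by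
    have h0 := congrArg (kill .s11) hE
    simp only [map_mul, map_add, map_sub, map_pow, kill_X_self] at h0
    rw [kill_X MomVar2.s11 MomVar2.s12 (by simp), kill_X MomVar2.s11 MomVar2.t111 (by simp),
      kill_X MomVar2.s11 MomVar2.t112 (by simp), kill_X MomVar2.s11 MomVar2.t122 (by simp)] at h0
    linear_combination -h0
  -- divide C0 by X s12
  have h1 : (X MomVar2.t111 * X MomVar2.t122 - X MomVar2.t112 ^ 2) * kill .s12 (kill .s11 C) = 0 := by
    have h0 := congrArg (kill .s12) hE0
    simp only [map_mul, map_add, map_sub, map_pow, kill_X_self, map_zero] at h0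
    rw [kill_X MomVar2.s12 MomVar2.t111 (by simp), kill_X MomVar2.s12 MomVar2.t112 (by simp),
      kill_X MomVar2.s12 MomVar2.t122 (by simp)] at h0
    linear_combination h0
  have h2 : kill .s12 (kill .s11 C) = 0 := by
    rcases mul_eq_zero.mp h1 with h | h
    · exact absurd h g3_ne_zero
    · exact h
  obtain ⟨C', hC'⟩ := X_dvd_of_kill_eq_zero h2
  -- cancel X s12
  have hE1 : X MomVar2.t111 * kill .s11 A + X MomVar2.t112 * kill .s11 B
      + (X MomVar2.t111 * X MomVar2.t122 - X MomVar2.t112 ^ 2) * C' = 0 := by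
    apply mul_left_cancel₀ (X_ne_zero MomVar2.s12 : (X MomVar2.s12 : PP) ≠ 0)
    rw [mul_zero]
    linear_combination hE0 - (X MomVar2.t111 * X MomVar2.t122 - X MomVar2.t112 ^ 2) * hC'
  -- divide B0 - e C' by X t111
  have h3 : X MomVar2.t112 * (kill .t111 (kill .s11 B) - X MomVar2.t112 * kill .t111 C') = 0 := by
    have h0 := congrArg (kill .t111) hE1
    simp only [map_mul, map_add, map_sub, map_pow, kill_X_self, map_zero] at h0
    rw [kill_X MomVar2.t111 MomVar2.t112 (by simp), kill_X MomVar2.t111 MomVar2.t122 (by simp)] at h0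
    linear_combination h0
  have h4 : kill .t111 (kill .s11 B - X MomVar2.t112 * C') = 0 := by
    rw [map_sub, map_mul, kill_X MomVar2.t111 MomVar2.t112 (by simp)]
    rcases mul_eq_zero.mp h3 with h | h
    · exact absurd h (X_ne_zero _)
    · exact h
  obtain ⟨B', hB'⟩ := X_dvd_of_kill_eq_zero h4
  -- A0 determination
  have h5 : X MomVar2.t111 * (kill .s11 A + X MomVar2.t112 * B' + X MomVar2.t122 * C') = 0 := by
    linear_combination hE1 - X MomVar2.t112 * hB'
  have h6 : kill .s11 A = -(X MomVar2.t112 * B' + X MomVar2.t122 * C') := by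
    rcases mul_eq_zero.mp h5 with h | h
    · exact absurd h (X_ne_zero _)
    · linear_combination h
  -- assemble
  rw [mem_II_iff]
  refine ⟨A1, B1, C1 - B', ?_⟩
  simp only [g1, g2, g3]
  apply mul_left_cancel₀ (X_ne_zero MomVar2.s11 : (X MomVar2.s11 : PP) ≠ 0)
  linear_combination hE + (X MomVar2.s12 * X MomVar2.t111 - X MomVar2.s11 * X MomVar2.t112) * hA1
    + (X MomVar2.s12 * X MomVar2.t112 - X MomVar2.s11 * X MomVar2.t122) * hB1
    + (X MomVar2.t111 * X MomVar2.t122 - X MomVar2.t112 ^ 2) * hC1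
    + (X MomVar2.s12 * X MomVar2.t111 - X MomVar2.s11 * X MomVar2.t112) * h6
    + (X MomVar2.s12 * X MomVar2.t112 - X MomVar2.s11 * X MomVar2.t122) * hB'
    + (X MomVar2.t111 * X MomVar2.t122 - X MomVar2.t112 ^ 2) * hC'

noncomputable def VV : Fin 5 → PP := ![X .s11, X .s12, X .s22, X .t111, X .t222]

@[simp] lemma VV0 : VV 0 = X MomVar2.s11 := rfl
@[simp] lemma VV1 : VV 1 = X MomVar2.s12 := rfl
@[simp] lemma VV2 : VV 2 = X MomVar2.s22 := rfl
@[simp] lemma VV3 : VV 3 = X MomVar2.t111 := rfl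
@[simp] lemma VV4 : VV 4 = X MomVar2.t222 := rfl

lemma red (p : PP) :
    ∃ (N : ℕ) (r : MvPolynomial (Fin 5) ℝ), (X MomVar2.s11) ^ N * p - aeval VV r ∈ II := by
  induction p using MvPolynomial.induction_on with
  | C c =>
      refine ⟨0, C c, ?_⟩
      have : (X MomVar2.s11) ^ 0 * (C c : PP) - aeval VV (C c) = 0 := by
        simp [algebraMap_eq]
      rw [this]; exact II.zero_mem
  | add p q hp hq =>
      obtain ⟨N1, r1, h1⟩ := hp
      obtain ⟨N2, r2, h2⟩ := hq
      refine ⟨N1 + N2, (X 0) ^ N2 * r1 + (X 0) ^ N1 * r2, ?_⟩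
      have key : (X MomVar2.s11) ^ (N1 + N2) * (p + q)
          - aeval VV ((X 0) ^ N2 * r1 + (X 0) ^ N1 * r2)
          = (X MomVar2.s11) ^ N2 * ((X MomVar2.s11) ^ N1 * p - aeval VV r1)
            + (X MomVar2.s11) ^ N1 * ((X MomVar2.s11) ^ N2 * q - aeval VV r2) := by
        simp only [map_add, map_mul, map_pow, aeval_X, VV0]
        ring
      rw [key]
      exact add_mem (Ideal.mul_mem_left _ _ h1) (Ideal.mul_mem_left _ _ h2)
  | mul_X p v hp =>
      obtain ⟨N, r, h⟩ := hp
      cases v with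
      | s11 =>
          refine ⟨N, X 0 * r, ?_⟩
          have key : (X MomVar2.s11) ^ N * (p * X MomVar2.s11) - aeval VV (X 0 * r)
              = X MomVar2.s11 * ((X MomVar2.s11) ^ N * p - aeval VV r) := by
            simp only [map_mul, aeval_X, VV0]; ring
          rw [key]; exact Ideal.mul_mem_left _ _ h
      | s12 =>
          refine ⟨N, X 1 * r, ?_⟩
          have key : (X MomVar2.s11) ^ N * (p * X MomVar2.s12) - aeval VV (X 1 * r)
              = X MomVar2.s12 * ((X MomVar2.s11) ^ N * p - aeval VV r) := by
            simp only [map_mul, aeval_X, VV1]; ring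
          rw [key]; exact Ideal.mul_mem_left _ _ h
      | s22 =>
          refine ⟨N, X 2 * r, ?_⟩
          have key : (X MomVar2.s11) ^ N * (p * X MomVar2.s22) - aeval VV (X 2 * r)
              = X MomVar2.s22 * ((X MomVar2.s11) ^ N * p - aeval VV r) := by
            simp only [map_mul, aeval_X, VV2]; ring
          rw [key]; exact Ideal.mul_mem_left _ _ h
      | t111 =>
          refine ⟨N, X 3 * r, ?_⟩
          have key : (X MomVar2.s11) ^ N * (p * X MomVar2.t111) - aeval VV (X 3 * r)
              = X MomVar2.t111 * ((X MomVar2.s11) ^ N * p - aeval VV r) := by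
            simp only [map_mul, aeval_X, VV3]; ring
          rw [key]; exact Ideal.mul_mem_left _ _ h
      | t222 =>
          refine ⟨N, X 4 * r, ?_⟩
          have key : (X MomVar2.s11) ^ N * (p * X MomVar2.t222) - aeval VV (X 4 * r)
              = X MomVar2.t222 * ((X MomVar2.s11) ^ N * p - aeval VV r) := by
            simp only [map_mul, aeval_X, VV4]; ring
          rw [key]; exact Ideal.mul_mem_left _ _ h
      | t112 =>
          refine ⟨N + 1, X 1 * X 3 * r, ?_⟩
          have key : (X MomVar2.s11) ^ (N + 1) * (p * X MomVar2.t112) - aeval VV (X 1 * X 3 * r)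
              = (X MomVar2.s11 * X MomVar2.t112) * ((X MomVar2.s11) ^ N * p - aeval VV r)
                - aeval VV r * g1 := by
            simp only [map_mul, aeval_X, VV1, VV3, g1]; ring
          rw [key]
          exact sub_mem (Ideal.mul_mem_left _ _ h) (Ideal.mul_mem_left _ _ g1_mem)
      | t122 =>
          refine ⟨N + 2, X 1 ^ 2 * X 3 * r, ?_⟩
          have key : (X MomVar2.s11) ^ (N + 2) * (p * X MomVar2.t122)
              - aeval VV (X 1 ^ 2 * X 3 * r)
              = (X MomVar2.s11 ^ 2 * X MomVar2.t122) * ((X MomVar2.s11) ^ N * p - aeval VV r)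
                - aeval VV r * X MomVar2.s11 * g2 - aeval VV r * X MomVar2.s12 * g1 := by
            simp only [map_mul, map_pow, aeval_X, VV1, VV3, g1, g2]; ring
          rw [key]
          exact sub_mem (sub_mem (Ideal.mul_mem_left _ _ h) (Ideal.mul_mem_left _ _ g2_mem))
            (Ideal.mul_mem_left _ _ g1_mem)

noncomputable def Fm : MomVar2 → MvPolynomial ParamVar2 ℝ := fun v => match v with
    | .s11 => X .w1
    | .s12 => X .lam * X .w1
    | .s22 => X .w2 + X .lam ^ 2 * X .w1
    | .t111 => X .v1
    | .t112 => X .lam * X .v1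
    | .t122 => X .lam ^ 2 * X .v1
    | .t222 => X .v2 + X .lam ^ 3 * X .v1

lemma phi_eq : phi = aeval Fm := rfl

@[simp] lemma Fm_s11 : Fm .s11 = X ParamVar2.w1 := rfl
@[simp] lemma Fm_s12 : Fm .s12 = X ParamVar2.lam * X ParamVar2.w1 := rfl
@[simp] lemma Fm_s22 : Fm .s22 = X ParamVar2.w2 + X ParamVar2.lam ^ 2 * X ParamVar2.w1 := rfl
@[simp] lemma Fm_t111 : Fm .t111 = X ParamVar2.v1 := rfl
@[simp] lemma Fm_t112 : Fm .t112 = X ParamVar2.lam * X ParamVar2.v1 := rfl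
@[simp] lemma Fm_t122 : Fm .t122 = X ParamVar2.lam ^ 2 * X ParamVar2.v1 := rfl
@[simp] lemma Fm_t222 : Fm .t222 = X ParamVar2.v2 + X ParamVar2.lam ^ 3 * X ParamVar2.v1 := rfl

lemma eval_aeval {σ τ : Type*} (κ : τ → ℝ) (F : σ → MvPolynomial τ ℝ) (p : MvPolynomial σ ℝ) :
    eval κ (aeval F p) = eval (fun i => eval κ (F i)) p := by
  induction p using MvPolynomial.induction_on with
  | C c => simp
  | add p q hp hq => simp only [map_add, hp, hq]
  | mul_X p i hp => rw [map_mul, map_mul, map_mul, hp, aeval_X, eval_X]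

noncomputable def kap (y : Fin 5 → ℝ) : ParamVar2 → ℝ := fun v => match v with
  | .w1 => y 0
  | .w2 => y 2 - (y 1 / y 0) ^ 2 * y 0
  | .v1 => y 3
  | .v2 => y 4 - (y 1 / y 0) ^ 3 * y 3
  | .lam => y 1 / y 0

@[simp] lemma kap_w1 (y : Fin 5 → ℝ) : kap y .w1 = y 0 := rfl
@[simp] lemma kap_w2 (y : Fin 5 → ℝ) : kap y .w2 = y 2 - (y 1 / y 0) ^ 2 * y 0 := rfl
@[simp] lemma kap_v1 (y : Fin 5 → ℝ) : kap y .v1 = y 3 := rfl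
@[simp] lemma kap_v2 (y : Fin 5 → ℝ) : kap y .v2 = y 4 - (y 1 / y 0) ^ 3 * y 3 := rfl
@[simp] lemma kap_lam (y : Fin 5 → ℝ) : kap y .lam = y 1 / y 0 := rfl

lemma phi_g1 : phi g1 = 0 := by
  rw [phi_eq]
  simp only [g1, map_sub, map_mul, aeval_X, Fm_s12, Fm_t111, Fm_s11, Fm_t112]
  ring

lemma phi_g2 : phi g2 = 0 := by
  rw [phi_eq]
  simp only [g2, map_sub, map_mul, aeval_X, Fm_s12, Fm_t112, Fm_s11, Fm_t122]
  ring

lemma phi_g3 : phi g3 = 0 := by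
  rw [phi_eq]
  simp only [g3, map_sub, map_mul, map_pow, aeval_X, Fm_t111, Fm_t122, Fm_t112]
  ring


/-- `ker φ` is generated by the three binomials
`s₁₂t₁₁₁ − s₁₁t₁₁₂`, `s₁₂t₁₁₂ − s₁₁t₁₂₂` and `t₁₁₁t₁₂₂ − t₁₁₂²`, i.e. by the `2 × 2`
minors of the matrix with rows `(s₁₁, t₁₁₁, t₁₁₂)` and `(s₁₂, t₁₁₂, t₁₂₂)`. -/
theorem kernel_two_vertex_dag :
    RingHom.ker phi.toRingHom =
      Ideal.span {X MomVar2.s12 * X MomVar2.t111 - X MomVar2.s11 * X MomVar2.t112,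
        X MomVar2.s12 * X MomVar2.t112 - X MomVar2.s11 * X MomVar2.t122,
        X MomVar2.t111 * X MomVar2.t122 - X MomVar2.t112 ^ 2} := by
  have hker : II ≤ RingHom.ker phi.toRingHom := by
    rw [II, Ideal.span_le]
    rintro x hx
    simp only [Set.mem_insert_iff, Set.mem_singleton_iff] at hx
    rcases hx with rfl | rfl | rfl
    · exact phi_g1
    · exact phi_g2
    · exact phi_g3
  apply le_antisymm
  · intro p hp
    rw [RingHom.mem_ker] at hp
    have hp' : phi p = 0 := hp
    show p ∈ II
    obtain ⟨N, r, hred⟩ := red p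
    have h0 : phi (aeval VV r) = 0 := by
      have hmem : phi ((X MomVar2.s11) ^ N * p - aeval VV r) = 0 := hker hred
      rw [map_sub, map_mul, map_pow, hp', mul_zero, zero_sub, neg_eq_zero] at hmem
      exact hmem
    have hr : r = 0 := by
      have hz : ∀ y : Fin 5 → ℝ, eval y ((X 0 : MvPolynomial (Fin 5) ℝ) * r) = 0 := by
        intro y
        rw [map_mul, eval_X]
        by_cases hy : y 0 = 0
        · rw [hy, zero_mul]
        · have heval : eval y r = 0 := by
            have h2 : eval (kap y) (phi (aeval VV r)) = 0 := by rw [h0, map_zero]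
            rw [phi_eq, eval_aeval, eval_aeval] at h2
            have hxy : (fun i => eval (fun v => eval (kap y) (Fm v)) (VV i)) = y := by
              funext i
              fin_cases i <;>
                simp [VV, hy]
            rwa [hxy] at h2
          rw [heval, mul_zero]
      have hXr : (X 0 : MvPolynomial (Fin 5) ℝ) * r = 0 := by
        apply MvPolynomial.funext
        intro x
        rw [hz x, map_zero]
      rcases mul_eq_zero.mp hXr with h | h
      · exact absurd h (X_ne_zero _)
      · exact h
    rw [hr, map_zero, sub_zero] at hred
    have peel : ∀ (n : ℕ) (q : PP), (X MomVar2.s11) ^ n * q ∈ II → q ∈ II := by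
      intro n
      induction n with
      | zero => intro q hq; simpa using hq
      | succ m ih =>
          intro q hq
          apply ih
          apply colon
          have e : X MomVar2.s11 * ((X MomVar2.s11) ^ m * q) = (X MomVar2.s11) ^ (m + 1) * q := by
            ring
          rw [e]
          exact hq
    exact peel N p hred
  · exact hker
end

section
/- Let G be the directed 3-cycle on vertices {1,2,3} with edges 1→2, 2→3 and 3→1. For every Λ∈ℝ^E with I−Λ invertible, every diagonal matrix Ω⁽²⁾ and every diagonal symmetric tensor Ω⁽³⁾, setting S=(I−Λ)^{−T}Ω⁽²⁾(I−Λ)^{−1} and T_{ijk}=Σ_a Ω⁽³⁾_{aaa}[(I−Λ)^{−1}]_{ai}[(I−Λ)^{−1}]_{aj}[(I−Λ)^{−1}]_{ak}, every 4×4 minor of the 4×6 matrix whose columns are indexed by the pairs 11, 12, 23, 22, 13, 33 and whose rows are (s₁₁,s₁₂,s₂₃,s₂₂,s₁₃,s₃₃), (t₁₁₁,t₁₁₂,t₁₂₃,t₁₂₂,t₁₁₃,t₁₃₃), (t₁₁₂,t₁₂₂,t₂₂₃,t₂₂₂,t₁₂₃,t₂₃₃), (t₁₁₃,t₁₂₃,t₂₃₃,t₂₂₃,t₁₃₃,t₃₃₃)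 vanishes (with s_{ij}=S_{ij} and t_{ijk}=T_{ijk}); that is, this matrix has rank at most 3. -/
open Matrix

lemma cons_val_five' {α : Type*} {m : ℕ} (x : α) (u : Fin (m + 5) → α) :
    Matrix.vecCons x u 5 =
      Matrix.vecHead (Matrix.vecTail (Matrix.vecTail (Matrix.vecTail (Matrix.vecTail u)))) :=
  rfl

lemma det_mul_eq_zero_aux (A : Matrix (Fin 4) (Fin 3) ℝ) (C : Matrix (Fin 3) (Fin 4) ℝ) :
    (A * C).det = 0 := by
  set A' : Matrix (Fin 4) (Fin 4) ℝ :=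
    Matrix.of (fun i j => if h : (j : ℕ) < 3 then A i ⟨j, h⟩ else 0) with hA'
  have hdet : A'.det = 0 := by
    apply Matrix.det_eq_zero_of_column_eq_zero 3
    intro i; simp only [hA', Matrix.of_apply]; exact dif_neg (by decide)
  obtain ⟨v, hv, hvA⟩ := Matrix.exists_vecMul_eq_zero_iff.mpr hdet
  have hvAN : v ᵥ* A = 0 := by
    funext x
    have := congrFun hvA (Fin.castSucc x)
    simpa [Matrix.vecMul, dotProduct, hA', Fin.is_lt] using this
  have : v ᵥ* (A * C) = 0 := by
    rw [← Matrix.vecMul_vecMul, hvAN, Matrix.zero_vecMul]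
  exact Matrix.exists_vecMul_eq_zero_iff.mp ⟨v, hv, this⟩

lemma factorization_aux (ω2 ω3 : Fin 3 → ℝ) (B : Matrix (Fin 3) (Fin 3) ℝ)
    (S : Matrix (Fin 3) (Fin 3) ℝ) (T : Fin 3 → Fin 3 → Fin 3 → ℝ)
    (hS' : ∀ i j, S i j = ∑ x, ω2 x * B x i * B x j)
    (hT' : ∀ i j k, T i j k = ∑ x, ω3 x * B x i * B x j * B x k) :
    !![S 0 0, S 0 1, S 1 2, S 1 1, S 0 2, S 2 2;
       T 0 0 0, T 0 0 1, T 0 1 2, T 0 1 1, T 0 0 2, T 0 2 2;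
       T 0 0 1, T 0 1 1, T 1 1 2, T 1 1 1, T 0 1 2, T 1 2 2;
       T 0 0 2, T 0 1 2, T 1 2 2, T 1 1 2, T 0 2 2, T 2 2 2] =
    !![ω2 0, ω2 1, ω2 2;
       ω3 0 * B 0 0, ω3 1 * B 1 0, ω3 2 * B 2 0;
       ω3 0 * B 0 1, ω3 1 * B 1 1, ω3 2 * B 2 1;
       ω3 0 * B 0 2, ω3 1 * B 1 2, ω3 2 * B 2 2] *
    !![B 0 0 * B 0 0, B 0 0 * B 0 1, B 0 1 * B 0 2, B 0 1 * B 0 1, B 0 0 * B 0 2, B 0 2 * B 0 2;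
       B 1 0 * B 1 0, B 1 0 * B 1 1, B 1 1 * B 1 2, B 1 1 * B 1 1, B 1 0 * B 1 2, B 1 2 * B 1 2;
       B 2 0 * B 2 0, B 2 0 * B 2 1, B 2 1 * B 2 2, B 2 1 * B 2 1, B 2 0 * B 2 2, B 2 2 * B 2 2]
    := by
  ext r k
  rw [Matrix.mul_apply, Fin.sum_univ_three]
  fin_cases r <;> fin_cases k <;>
    simp [hS', hT', Fin.sum_univ_three, Matrix.cons_val_succ, cons_val_five'] <;> ring

set_option maxHeartbeats 1000000 in
/-- For the directed 3-cycle `1 → 2 → 3 → 1`, the second and third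
moments produced by the linear structural equation model make the displayed `4 × 6`
matrix have rank at most `3`: every `4 × 4` minor vanishes. -/
theorem three_cycle_minors (a b c : ℝ) (Λ : Matrix (Fin 3) (Fin 3) ℝ)
    (hΛ : Λ = !![0, a, 0; 0, 0, b; c, 0, 0])
    (hinv : IsUnit (1 - Λ).det)
    (ω2 ω3 : Fin 3 → ℝ) (S : Matrix (Fin 3) (Fin 3) ℝ)
    (T : Fin 3 → Fin 3 → Fin 3 → ℝ)
    (hS : S = ((1 - Λ)⁻¹)ᵀ * Matrix.diagonal ω2 * (1 - Λ)⁻¹)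
    (hT : ∀ i j k, T i j k =
      ∑ x, ω3 x * (1 - Λ)⁻¹ x i * (1 - Λ)⁻¹ x j * (1 - Λ)⁻¹ x k)
    (M : Matrix (Fin 4) (Fin 6) ℝ)
    (hM : M = !![S 0 0, S 0 1, S 1 2, S 1 1, S 0 2, S 2 2;
                 T 0 0 0, T 0 0 1, T 0 1 2, T 0 1 1, T 0 0 2, T 0 2 2;
                 T 0 0 1, T 0 1 1, T 1 1 2, T 1 1 1, T 0 1 2, T 1 2 2;
                 T 0 0 2, T 0 1 2, T 1 2 2, T 1 1 2, T 0 2 2, T 2 2 2]) :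
    (∀ cols : Fin 4 → Fin 6, Function.Injective cols →
      (M.submatrix id cols).det = 0) ∧ M.rank ≤ 3 := by
  have hS' : ∀ i j, S i j = ∑ x, ω2 x * (1 - Λ)⁻¹ x i * (1 - Λ)⁻¹ x j := by
    intro i j
    rw [hS]
    simp only [Matrix.mul_apply, Matrix.transpose_apply, Matrix.diagonal_apply,
      Fin.sum_univ_three]
    simp [Fin.sum_univ_three]
    ring
  have hT' : ∀ i j k, T i j k
      = ∑ x, ω3 x * (1 - Λ)⁻¹ x i * (1 - Λ)⁻¹ x j * (1 - Λ)⁻¹ x k := hT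
  clear hS hT hΛ hinv
  generalize hBe : (1 - Λ)⁻¹ = B at hS' hT'
  clear hBe
  have hfac0 := factorization_aux ω2 ω3 B S T hS' hT'
  rw [← hM] at hfac0
  obtain ⟨N, P, hfac⟩ : ∃ (N : Matrix (Fin 4) (Fin 3) ℝ) (P : Matrix (Fin 3) (Fin 6) ℝ),
      M = N * P := ⟨_, _, hfac0⟩
  constructor
  · intro cols hcols
    have h2 : M.submatrix id cols = N * (P.submatrix id cols) := by
      rw [hfac]; ext i j; simp [Matrix.mul_apply, Matrix.submatrix_apply]
    rw [h2]
    exact det_mul_eq_zero_aux _ _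
  · refine le_trans ?_ (le_trans (Matrix.rank_le_card_width N) (by simp))
    rw [hfac]
    exact Matrix.rank_mul_le_left N P
end
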